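/- If H_{l,i}, H_{l,j} are jointly complex Gaussian with independent real/imaginary parts, each component having variance σ_H², and the real components satisfy E[H_{l,i,I} H_{l,j,I}] = E[H_{l,i,Q} H_{l,j,Q}] = R, with independence across the real/quadrature split and across rows l = 1,...,N_r, then E[|Σ_{l=1}^{N_r} H_{l,i}* H_{l,j}|²] = 4N_r(σ_H⁴ + N_r R²). -/

import Mathlib

open MeasureTheory ProbabilityTheory
open scoped NNReal ENNReal BigOperators


section AuxGaussianMoments
open Real Filter

lemma gint {b : ℝ} (hb : 0 < b) (n : ℕ) :
    Integrable (fun x : ℝ => x ^ n * Real.exp (-b * x ^ 2)) := by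
  have hcont : Continuous (fun x : ℝ => x ^ n * Real.exp (-b * x ^ 2)) := by continuity
  refine hcont.locallyIntegrable.integrable_of_isBigO_atTop_of_norm_isNegInvariant
    (Filter.EventuallyEq.of_eq ?_) ?_
    ⟨Set.Ioi 0, Ioi_mem_atTop 0, exp_neg_integrableOn_Ioi 0 one_half_pos⟩
  · funext x
    simp [Function.comp, abs_mul, abs_pow, abs_neg, neg_sq]
  · have h := rpow_mul_exp_neg_mul_sq_isLittleO_exp_neg hb (n : ℝ)
    have h2 : (fun x : ℝ => x ^ n * Real.exp (-b * x ^ 2))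
        =ᶠ[atTop] (fun x : ℝ => x ^ (n : ℝ) * Real.exp (-b * x ^ 2)) := by
      filter_upwards [eventually_ge_atTop (0:ℝ)] with x hx
      rw [Real.rpow_natCast]
    calc (fun x : ℝ => x ^ n * Real.exp (-b * x ^ 2))
        =O[atTop] (fun x : ℝ => x ^ (n:ℝ) * Real.exp (-b * x ^ 2)) := h2.isBigO
      _ =O[atTop] (fun x : ℝ => Real.exp (-(1/2) * x)) := h.isBigO

lemma grec {b : ℝ} (hb : 0 < b) (n : ℕ) :
    ∫ x : ℝ, x ^ (n + 2) * Real.exp (-b * x ^ 2) =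
      ((n : ℝ) + 1) / (2 * b) * ∫ x : ℝ, x ^ n * Real.exp (-b * x ^ 2) := by
  have hu : ∀ x : ℝ, HasDerivAt (fun x : ℝ => -(2*b)⁻¹ * x ^ (n+1))
      (-(2*b)⁻¹ * ((n:ℝ)+1) * x ^ n) x := by
    intro x
    have := (hasDerivAt_pow (n+1) x).const_mul (-(2*b)⁻¹)
    simpa [mul_assoc, mul_comm, mul_left_comm] using this
  have hv : ∀ x : ℝ, HasDerivAt (fun x : ℝ => Real.exp (-b * x ^ 2))
      (-2 * b * x * Real.exp (-b * x ^ 2)) x := by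
    intro x
    have h1 : HasDerivAt (fun x : ℝ => -b * x ^ 2) (-2 * b * x) x := by
      have := (hasDerivAt_pow 2 x).const_mul (-b)
      simpa [mul_comm, mul_assoc, mul_left_comm] using this
    simpa [mul_comm] using h1.exp
  have key := integral_mul_deriv_eq_deriv_mul_of_integrable (fun x _ => hu x) (fun x _ => hv x) ?_ ?_ ?_
  · have e1 : ∀ x : ℝ, (-(2*b)⁻¹ * x ^ (n+1)) * (-2 * b * x * Real.exp (-b * x ^ 2))
        = x ^ (n+2) * Real.exp (-b * x ^ 2) := by
      intro x; field_simp; ring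
    have e2 : ∀ x : ℝ, (-(2*b)⁻¹ * ((n:ℝ)+1) * x ^ n) * Real.exp (-b * x ^ 2)
        = -((((n:ℝ)+1) / (2*b)) * (x ^ n * Real.exp (-b * x ^ 2))) := by
      intro x; field_simp
    calc ∫ x : ℝ, x ^ (n + 2) * Real.exp (-b * x ^ 2)
        = ∫ x : ℝ, (-(2*b)⁻¹ * x ^ (n+1)) * (-2 * b * x * Real.exp (-b * x ^ 2)) := by
          simp_rw [e1]
      _ = - ∫ x : ℝ, (-(2*b)⁻¹ * ((n:ℝ)+1) * x ^ n) * Real.exp (-b * x ^ 2) := key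
      _ = - ∫ x : ℝ, -((((n:ℝ)+1) / (2*b)) * (x ^ n * Real.exp (-b * x ^ 2))) := by
          simp_rw [e2]
      _ = ((n : ℝ) + 1) / (2 * b) * ∫ x : ℝ, x ^ n * Real.exp (-b * x ^ 2) := by
          rw [integral_neg, neg_neg, integral_const_mul]
  · have : (fun x : ℝ => (-(2*b)⁻¹ * x ^ (n+1)) * (-2 * b * x * Real.exp (-b * x ^ 2)))
        = fun x : ℝ => x ^ (n+2) * Real.exp (-b * x ^ 2) := by
      funext x; field_simp; ring
    rw [show ((fun x : ℝ => -(2*b)⁻¹ * x ^ (n+1)) * fun x => -2 * b * x * Real.exp (-b * x ^ 2))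
        = fun x : ℝ => (-(2*b)⁻¹ * x ^ (n+1)) * (-2 * b * x * Real.exp (-b * x ^ 2)) from rfl, this]
    exact gint hb (n+2)
  · have : (fun x : ℝ => (-(2*b)⁻¹ * ((n:ℝ)+1) * x ^ n) * Real.exp (-b * x ^ 2))
        = fun x : ℝ => (-(2*b)⁻¹ * ((n:ℝ)+1)) * (x ^ n * Real.exp (-b * x ^ 2)) := by
      funext x; ring
    rw [show ((fun x : ℝ => -(2*b)⁻¹ * ((n:ℝ)+1) * x ^ n) * fun x => Real.exp (-b * x ^ 2))
        = fun x : ℝ => (-(2*b)⁻¹ * ((n:ℝ)+1) * x ^ n) * Real.exp (-b * x ^ 2) from rfl, this]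
    exact (gint hb n).const_mul _
  · have : ((fun x : ℝ => -(2*b)⁻¹ * x ^ (n+1)) * fun x => Real.exp (-b * x ^ 2))
        = fun x : ℝ => (-(2*b)⁻¹) * (x ^ (n+1) * Real.exp (-b * x ^ 2)) := by
      funext x; simp [Pi.mul_apply]; ring
    rw [this]
    exact (gint hb (n+1)).const_mul _

lemma gauss_density (v : ℝ≥0) (hv : v ≠ 0) :
    gaussianReal 0 v = volume.withDensity
      (fun x => ((Real.toNNReal (gaussianPDFReal 0 v x) : ℝ≥0) : ℝ≥0∞)) := by
  rw [gaussianReal_of_var_ne_zero 0 hv]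
  rfl

lemma pdf_eq (v : ℝ≥0) (x : ℝ) :
    gaussianPDFReal 0 v x = (Real.sqrt (2 * π * v))⁻¹ * Real.exp (-(2 * (v:ℝ))⁻¹ * x ^ 2) := by
  rw [gaussianPDFReal]
  ring_nf

lemma gaussianReal_integrable_pow (v : ℝ≥0) (n : ℕ) :
    Integrable (fun x : ℝ => x ^ n) (gaussianReal 0 v) := by
  rcases eq_or_ne v 0 with rfl | hv
  · rw [gaussianReal_zero_var]
    constructor
    · exact (measurable_id.pow_const n).aestronglyMeasurable
    · rw [HasFiniteIntegral, lintegral_dirac]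
      simp
  · rw [gauss_density v hv,
      integrable_withDensity_iff_integrable_smul
        (measurable_gaussianPDFReal 0 v).real_toNNReal]
    have hb : (0:ℝ) < (2 * (v:ℝ))⁻¹ := by positivity
    have : (fun x : ℝ => (Real.toNNReal (gaussianPDFReal 0 v x) : ℝ≥0) • (x ^ n))
        = fun x : ℝ => (Real.sqrt (2 * π * v))⁻¹ * (x ^ n * Real.exp (-(2 * (v:ℝ))⁻¹ * x ^ 2)) := by
      funext x
      rw [NNReal.smul_def, smul_eq_mul, Real.coe_toNNReal _ (gaussianPDFReal_nonneg 0 v x), pdf_eq]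
      ring
    rw [this]
    exact (gint hb n).const_mul _

lemma gaussianReal_integral_pow (v : ℝ≥0) (hv : v ≠ 0) (n : ℕ) :
    ∫ x, x ^ n ∂(gaussianReal 0 v) =
      (Real.sqrt (2 * π * v))⁻¹ * ∫ x : ℝ, x ^ n * Real.exp (-(2 * (v:ℝ))⁻¹ * x ^ 2) := by
  rw [gauss_density v hv,
    integral_withDensity_eq_integral_smul
      (measurable_gaussianPDFReal 0 v).real_toNNReal]
  rw [← integral_const_mul]
  congr 1
  funext x
  rw [NNReal.smul_def, smul_eq_mul, Real.coe_toNNReal _ (gaussianPDFReal_nonneg 0 v x), pdf_eq]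
  ring

lemma sqrt_ne (v : ℝ≥0) (hv : v ≠ 0) : Real.sqrt (2 * π * v) ≠ 0 := by
  have : (0:ℝ) < v := by positivity
  positivity

lemma aux0 (v : ℝ≥0) (hv : v ≠ 0) :
    ∫ x : ℝ, x ^ 0 * Real.exp (-(2 * (v:ℝ))⁻¹ * x ^ 2) = Real.sqrt (2 * π * v) := by
  have hv' : (0:ℝ) < v := by positivity
  simp only [pow_zero, one_mul]
  rw [integral_gaussian]
  rw [show π / (2 * (v:ℝ))⁻¹ = 2 * π * v by field_simp]

lemma gaussianReal_m2 (v : ℝ≥0) : ∫ x, x ^ 2 ∂(gaussianReal 0 v) = v := by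
  rcases eq_or_ne v 0 with rfl | hv
  · rw [gaussianReal_zero_var]; simp
  · have hv' : (0:ℝ) < v := by positivity
    have hb : (0:ℝ) < (2 * (v:ℝ))⁻¹ := by positivity
    rw [gaussianReal_integral_pow v hv 2, show (2:ℕ) = 0 + 2 from rfl, grec hb 0, aux0 v hv]
    rw [show ((0:ℕ):ℝ) + 1 = 1 by norm_num]
    field_simp

lemma gaussianReal_m4 (v : ℝ≥0) : ∫ x, x ^ 4 ∂(gaussianReal 0 v) = 3 * (v:ℝ) ^ 2 := by
  rcases eq_or_ne v 0 with rfl | hv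
  · rw [gaussianReal_zero_var]; simp
  · have hv' : (0:ℝ) < v := by positivity
    have hb : (0:ℝ) < (2 * (v:ℝ))⁻¹ := by positivity
    rw [gaussianReal_integral_pow v hv 4, show (4:ℕ) = 2 + 2 from rfl, grec hb 2,
      show (fun x : ℝ => x ^ 2 * Real.exp (-(2 * (v:ℝ))⁻¹ * x ^ 2))
        = fun x : ℝ => x ^ (0 + 2) * Real.exp (-(2 * (v:ℝ))⁻¹ * x ^ 2) from rfl,
      grec hb 0, aux0 v hv]
    rw [show ((2:ℕ):ℝ) + 1 = 3 by norm_num, show ((0:ℕ):ℝ) + 1 = 1 by norm_num]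
    field_simp

lemma pair_moments {Ω : Type*} [MeasurableSpace Ω] (μ : Measure Ω) [IsProbabilityMeasure μ]
    (σ2 r : ℝ) (A B : Ω → ℝ)
    (hsum : ∀ n : ℕ, Integrable (fun ω => (A ω + B ω) ^ n) μ)
    (hdiff : ∀ n : ℕ, Integrable (fun ω => (A ω - B ω) ^ n) μ)
    (hA : ∀ n : ℕ, Integrable (fun ω => (A ω) ^ n) μ)
    (hB : ∀ n : ℕ, Integrable (fun ω => (B ω) ^ n) μ)
    (hA2 : ∫ ω, (A ω) ^ 2 ∂μ = σ2) (hB2 : ∫ ω, (B ω) ^ 2 ∂μ = σ2)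
    (hA4 : ∫ ω, (A ω) ^ 4 ∂μ = 3 * σ2 ^ 2) (hB4 : ∫ ω, (B ω) ^ 4 ∂μ = 3 * σ2 ^ 2)
    (hs2 : ∫ ω, (A ω + B ω) ^ 2 ∂μ = 2 * σ2 + 2 * r)
    (hs4 : ∫ ω, (A ω + B ω) ^ 4 ∂μ = 3 * (2 * σ2 + 2 * r) ^ 2)
    (hd4 : ∫ ω, (A ω - B ω) ^ 4 ∂μ = 3 * (2 * σ2 - 2 * r) ^ 2) :
    Integrable (fun ω => A ω * B ω) μ ∧ (∫ ω, A ω * B ω ∂μ = r) ∧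
    Integrable (fun ω => (A ω * B ω) ^ 2) μ ∧
    (∫ ω, (A ω * B ω) ^ 2 ∂μ = σ2 ^ 2 + 2 * r ^ 2) := by
  have e1 : (fun ω => A ω * B ω)
      = fun ω => ((A ω + B ω) ^ 2 - (A ω) ^ 2 - (B ω) ^ 2) / 2 := by
    funext ω; ring
  have int1 : Integrable (fun ω => A ω * B ω) μ := by
    rw [e1]; exact (((hsum 2).sub (hA 2)).sub (hB 2)).div_const 2
  have e2 : (fun ω => (A ω * B ω) ^ 2)
      = fun ω => ((A ω + B ω) ^ 4 + (A ω - B ω) ^ 4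
          - 2 * (A ω) ^ 4 - 2 * (B ω) ^ 4) / 12 := by
    funext ω; ring
  have int2 : Integrable (fun ω => (A ω * B ω) ^ 2) μ := by
    rw [e2]
    exact ((((hsum 4).add (hdiff 4)).sub ((hA 4).const_mul 2)).sub
      ((hB 4).const_mul 2)).div_const 12
  refine ⟨int1, ?_, int2, ?_⟩
  · rw [e1]
    have j1 : Integrable (fun ω => (A ω + B ω) ^ 2 - A ω ^ 2) μ := (hsum 2).sub (hA 2)
    rw [integral_div, integral_sub j1 (hB 2),
      integral_sub (hsum 2) (hA 2), hs2, hA2, hB2]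
    ring
  · rw [e2]
    have i1 : Integrable (fun ω => (A ω + B ω) ^ 4 + (A ω - B ω) ^ 4) μ :=
      (hsum 4).add (hdiff 4)
    have i2 : Integrable (fun ω => 2 * (A ω) ^ 4) μ := (hA 4).const_mul 2
    have i3 : Integrable (fun ω => 2 * (B ω) ^ 4) μ := (hB 4).const_mul 2
    have j2 : Integrable (fun ω => (A ω + B ω) ^ 4 + (A ω - B ω) ^ 4 - 2 * A ω ^ 4) μ :=
      i1.sub i2
    rw [integral_div, integral_sub j2 i3, integral_sub i1 i2,
      integral_add (hsum 4) (hdiff 4), integral_const_mul, integral_const_mul,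
      hs4, hd4, hA4, hB4]
    ring

lemma row_moments {Ω : Type*} [MeasurableSpace Ω] (μ : Measure Ω) [IsProbabilityMeasure μ]
    (σH R : ℝ) (hσH : 0 < σH) (Y : Ω → Fin 4 → ℝ)
    (hGauss : ∀ c : Fin 4 → ℝ,
      Measure.map (fun ω => ∑ k, c k * Y ω k) μ =
        gaussianReal 0 (Real.toNNReal (∑ k, ∑ m, c k * c m *
          (![![σH ^ 2, 0, R, 0], ![0, σH ^ 2, 0, R],
             ![R, 0, σH ^ 2, 0], ![0, R, 0, σH ^ 2]] : Fin 4 → Fin 4 → ℝ) k m))) :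
    (Integrable (fun ω => Y ω 0 * Y ω 2 + Y ω 1 * Y ω 3) μ) ∧
    (Integrable (fun ω => Y ω 0 * Y ω 3 - Y ω 1 * Y ω 2) μ) ∧
    (∫ ω, (Y ω 0 * Y ω 2 + Y ω 1 * Y ω 3) ∂μ = 2 * R) ∧
    (∫ ω, (Y ω 0 * Y ω 3 - Y ω 1 * Y ω 2) ∂μ = 0) ∧
    (Integrable (fun ω => (Y ω 0 * Y ω 2 + Y ω 1 * Y ω 3) ^ 2
        + (Y ω 0 * Y ω 3 - Y ω 1 * Y ω 2) ^ 2) μ) ∧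
    (∫ ω, ((Y ω 0 * Y ω 2 + Y ω 1 * Y ω 3) ^ 2
        + (Y ω 0 * Y ω 3 - Y ω 1 * Y ω 2) ^ 2) ∂μ = 4 * σH ^ 4 + 4 * R ^ 2) := by
  set C : Fin 4 → Fin 4 → ℝ := ![![σH ^ 2, 0, R, 0], ![0, σH ^ 2, 0, R],
             ![R, 0, σH ^ 2, 0], ![0, R, 0, σH ^ 2]] with hC
  -- basic facts for arbitrary coefficient vectors
  have haem : ∀ c : Fin 4 → ℝ, AEMeasurable (fun ω => ∑ k, c k * Y ω k) μ := by
    intro c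
    by_contra h
    have h0 := hGauss c
    rw [Measure.map_of_not_aemeasurable h] at h0
    have h1 := congrArg (fun m : Measure ℝ => m Set.univ) h0
    simp only [Measure.coe_zero, Pi.zero_apply] at h1
    rw [measure_univ] at h1
    exact zero_ne_one h1
  have hint : ∀ (c : Fin 4 → ℝ) (n : ℕ),
      Integrable (fun ω => (∑ k, c k * Y ω k) ^ n) μ := by
    intro c n
    have h1 : Integrable (fun x : ℝ => x ^ n)
        (Measure.map (fun ω => ∑ k, c k * Y ω k) μ) := by
      rw [hGauss c]; exact gaussianReal_integrable_pow _ n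
    have h2 := (integrable_map_measure
      (measurable_id.pow_const n).aestronglyMeasurable (haem c)).mp h1
    exact h2
  have hm2 : ∀ c : Fin 4 → ℝ, ∫ ω, (∑ k, c k * Y ω k) ^ 2 ∂μ
      = ((Real.toNNReal (∑ k, ∑ m, c k * c m * C k m) : ℝ≥0) : ℝ) := by
    intro c
    have h1 := integral_map (haem c)
      (f := fun x : ℝ => x ^ 2) (measurable_id.pow_const 2).aestronglyMeasurable
    rw [hGauss c, gaussianReal_m2] at h1
    exact h1.symm
  have hm4 : ∀ c : Fin 4 → ℝ, ∫ ω, (∑ k, c k * Y ω k) ^ 4 ∂μ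
      = 3 * ((Real.toNNReal (∑ k, ∑ m, c k * c m * C k m) : ℝ≥0) : ℝ) ^ 2 := by
    intro c
    have h1 := integral_map (haem c)
      (f := fun x : ℝ => x ^ 4) (measurable_id.pow_const 4).aestronglyMeasurable
    rw [hGauss c, gaussianReal_m4] at h1
    exact h1.symm
  have hσ2 : (0:ℝ) ≤ σH ^ 2 := sq_nonneg σH
  -- single coordinates
  have single : ∀ k : Fin 4, (∀ n : ℕ, Integrable (fun ω => (Y ω k) ^ n) μ) ∧
      (∫ ω, (Y ω k) ^ 2 ∂μ = σH ^ 2) ∧ (∫ ω, (Y ω k) ^ 4 ∂μ = 3 * (σH ^ 2) ^ 2) := by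
    intro k
    have e : ∀ ω, (∑ j, (Pi.single k 1 : Fin 4 → ℝ) j * Y ω j) = Y ω k := by
      intro ω
      rw [Finset.sum_eq_single k]
      · simp
      · intro b _ hb; simp [Pi.single_apply, hb]
      · simp
    have vv : (∑ j, ∑ m, (Pi.single k 1 : Fin 4 → ℝ) j * (Pi.single k 1 : Fin 4 → ℝ) m
        * C j m) = σH ^ 2 := by
      rw [Finset.sum_eq_single k]
      · rw [Finset.sum_eq_single k]
        · have : C k k = σH ^ 2 := by fin_cases k <;> simp [hC]
          simp [this]
        · intro b _ hb; simp [Pi.single_apply, hb]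
        · simp
      · intro b _ hb
        simp only [Pi.single_apply, hb, if_neg hb, zero_mul]
        simp
      · simp
    refine ⟨fun n => ?_, ?_, ?_⟩
    · have := hint (Pi.single k 1) n
      simpa only [e] using this
    · have := hm2 (Pi.single k 1)
      simp only [e, vv] at this
      rwa [Real.coe_toNNReal _ hσ2] at this
    · have := hm4 (Pi.single k 1)
      simp only [e, vv] at this
      rwa [Real.coe_toNNReal _ hσ2] at this
  -- parallelogram law gives |R| ≤ σH²
  have epl : ∀ ω, (∑ j, (![(1:ℝ),0,1,0]) j * Y ω j) = Y ω 0 + Y ω 2 := by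
    intro ω; simp [Fin.sum_univ_four]
  have emi : ∀ ω, (∑ j, (![(1:ℝ),0,-1,0]) j * Y ω j) = Y ω 0 - Y ω 2 := by
    intro ω; simp [Fin.sum_univ_four]; ring
  have vpl : (∑ j, ∑ m, (![(1:ℝ),0,1,0]) j * (![(1:ℝ),0,1,0]) m * C j m)
      = 2 * σH ^ 2 + 2 * R := by simp [hC, Fin.sum_univ_four]; ring
  have vmi : (∑ j, ∑ m, (![(1:ℝ),0,-1,0]) j * (![(1:ℝ),0,-1,0]) m * C j m)
      = 2 * σH ^ 2 - 2 * R := by simp [hC, Fin.sum_univ_four]; ring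
  have hpar : ((Real.toNNReal (2 * σH ^ 2 + 2 * R) : ℝ≥0) : ℝ)
      + ((Real.toNNReal (2 * σH ^ 2 - 2 * R) : ℝ≥0) : ℝ) = 4 * σH ^ 2 := by
    have h1 := hm2 ![(1:ℝ),0,1,0]
    have h2 := hm2 ![(1:ℝ),0,-1,0]
    simp only [epl, vpl] at h1
    simp only [emi, vmi] at h2
    have hpt : (fun ω => (Y ω 0 + Y ω 2) ^ 2)
        = fun ω => 2 * (Y ω 0) ^ 2 + 2 * (Y ω 2) ^ 2 - (Y ω 0 - Y ω 2) ^ 2 := by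
      funext ω; ring
    have i0 := (single 0).1 2
    have i2 := (single 2).1 2
    have imib : Integrable (fun ω => (Y ω 0 - Y ω 2) ^ 2) μ := by
      have := hint ![(1:ℝ),0,-1,0] 2
      simpa only [emi] using this
    have iA : Integrable (fun ω => 2 * (Y ω 0) ^ 2 + 2 * (Y ω 2) ^ 2) μ :=
      (i0.const_mul 2).add (i2.const_mul 2)
    rw [hpt, integral_sub iA imib, integral_add (i0.const_mul 2) (i2.const_mul 2),
      integral_const_mul, integral_const_mul, (single 0).2.1, (single 2).2.1, h2] at h1
    linarith [h1]
  have hRle : R ≤ σH ^ 2 := by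
    have m1 : 2 * σH ^ 2 + 2 * R ≤ ((Real.toNNReal (2 * σH ^ 2 + 2 * R) : ℝ≥0) : ℝ) := by
      rw [Real.coe_toNNReal']; exact le_max_left _ _
    have m2 : (0:ℝ) ≤ ((Real.toNNReal (2 * σH ^ 2 - 2 * R) : ℝ≥0) : ℝ) := NNReal.coe_nonneg _
    linarith
  have hRge : -(σH ^ 2) ≤ R := by
    have m1 : 2 * σH ^ 2 - 2 * R ≤ ((Real.toNNReal (2 * σH ^ 2 - 2 * R) : ℝ≥0) : ℝ) := by
      rw [Real.coe_toNNReal']; exact le_max_left _ _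
    have m2 : (0:ℝ) ≤ ((Real.toNNReal (2 * σH ^ 2 + 2 * R) : ℝ≥0) : ℝ) := NNReal.coe_nonneg _
    linarith
  have hplnn : (0:ℝ) ≤ 2 * σH ^ 2 + 2 * R := by linarith
  have hminn : (0:ℝ) ≤ 2 * σH ^ 2 - 2 * R := by linarith
  -- generic pair analysis
  have pair : ∀ (k m : Fin 4) (r : ℝ) (cp cm : Fin 4 → ℝ),
      (∀ ω, (∑ j, cp j * Y ω j) = Y ω k + Y ω m) →
      (∀ ω, (∑ j, cm j * Y ω j) = Y ω k - Y ω m) →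
      ((∑ j, ∑ i, cp j * cp i * C j i) = 2 * σH ^ 2 + 2 * r) →
      ((∑ j, ∑ i, cm j * cm i * C j i) = 2 * σH ^ 2 - 2 * r) →
      ((0:ℝ) ≤ 2 * σH ^ 2 + 2 * r) → ((0:ℝ) ≤ 2 * σH ^ 2 - 2 * r) →
      Integrable (fun ω => Y ω k * Y ω m) μ ∧ (∫ ω, Y ω k * Y ω m ∂μ = r) ∧
      Integrable (fun ω => (Y ω k * Y ω m) ^ 2) μ ∧
      (∫ ω, (Y ω k * Y ω m) ^ 2 ∂μ = (σH ^ 2) ^ 2 + 2 * r ^ 2) := by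
    intro k m r cp cm ep em vp vm hp hm
    refine pair_moments μ (σH ^ 2) r (fun ω => Y ω k) (fun ω => Y ω m)
      (fun n => by simpa only [ep] using hint cp n)
      (fun n => by simpa only [em] using hint cm n)
      ((single k).1) ((single m).1) ((single k).2.1) ((single m).2.1)
      ((single k).2.2) ((single m).2.2) ?_ ?_ ?_
    · have := hm2 cp; simp only [ep, vp] at this
      rwa [Real.coe_toNNReal _ hp] at this
    · have := hm4 cp; simp only [ep, vp] at this
      rwa [Real.coe_toNNReal _ hp] at this
    · have := hm4 cm; simp only [em, vm] at this
      rwa [Real.coe_toNNReal _ hm] at this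
  have p02 := pair 0 2 R ![(1:ℝ),0,1,0] ![(1:ℝ),0,-1,0] epl emi vpl vmi hplnn hminn
  have p13 := pair 1 3 R ![(0:ℝ),1,0,1] ![(0:ℝ),1,0,-1]
    (fun ω => by simp [Fin.sum_univ_four]) (fun ω => by simp [Fin.sum_univ_four]; ring)
    (by simp [hC, Fin.sum_univ_four]; ring) (by simp [hC, Fin.sum_univ_four]; ring)
    hplnn hminn
  have p03 := pair 0 3 0 ![(1:ℝ),0,0,1] ![(1:ℝ),0,0,-1]
    (fun ω => by simp [Fin.sum_univ_four]) (fun ω => by simp [Fin.sum_univ_four]; ring)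
    (by simp [hC, Fin.sum_univ_four]; ring) (by simp [hC, Fin.sum_univ_four]; ring)
    (by positivity) (by simp; positivity)
  have p12 := pair 1 2 0 ![(0:ℝ),1,1,0] ![(0:ℝ),1,-1,0]
    (fun ω => by simp [Fin.sum_univ_four]) (fun ω => by simp [Fin.sum_univ_four]; ring)
    (by simp [hC, Fin.sum_univ_four]; ring) (by simp [hC, Fin.sum_univ_four]; ring)
    (by positivity) (by simp; positivity)
  have intRe : Integrable (fun ω => Y ω 0 * Y ω 2 + Y ω 1 * Y ω 3) μ := p02.1.add p13.1
  have intIm : Integrable (fun ω => Y ω 0 * Y ω 3 - Y ω 1 * Y ω 2) μ := p03.1.sub p12.1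
  have eQ : (fun ω => (Y ω 0 * Y ω 2 + Y ω 1 * Y ω 3) ^ 2
      + (Y ω 0 * Y ω 3 - Y ω 1 * Y ω 2) ^ 2)
      = fun ω => (Y ω 0 * Y ω 2) ^ 2 + (Y ω 1 * Y ω 3) ^ 2
        + (Y ω 0 * Y ω 3) ^ 2 + (Y ω 1 * Y ω 2) ^ 2 := by
    funext ω; ring
  have intQ : Integrable (fun ω => (Y ω 0 * Y ω 2 + Y ω 1 * Y ω 3) ^ 2
      + (Y ω 0 * Y ω 3 - Y ω 1 * Y ω 2) ^ 2) μ := by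
    rw [eQ]
    exact ((p02.2.2.1.add p13.2.2.1).add p03.2.2.1).add p12.2.2.1
  refine ⟨intRe, intIm, ?_, ?_, intQ, ?_⟩
  · rw [integral_add p02.1 p13.1, p02.2.1, p13.2.1]; ring
  · rw [integral_sub p03.1 p12.1, p03.2.1, p12.2.1]; ring
  · rw [eQ]
    have i1 : Integrable (fun ω => (Y ω 0 * Y ω 2) ^ 2 + (Y ω 1 * Y ω 3) ^ 2) μ :=
      p02.2.2.1.add p13.2.2.1
    have i2 : Integrable (fun ω => (Y ω 0 * Y ω 2) ^ 2 + (Y ω 1 * Y ω 3) ^ 2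
        + (Y ω 0 * Y ω 3) ^ 2) μ := i1.add p03.2.2.1
    rw [integral_add i2 p12.2.2.1, integral_add i1 p03.2.2.1,
      integral_add p02.2.2.1 p13.2.2.1, p02.2.2.2, p13.2.2.2, p03.2.2.2, p12.2.2.2]
    ring

end AuxGaussianMoments

/-- Correlated-channel fourth moment.  For each row `l`, the real vector
`X l = (H_{l,i,I}, H_{l,i,Q}, H_{l,j,I}, H_{l,j,Q})` is centered jointly Gaussian (every
linear combination is a centered Gaussian) with covariance matrix
`[[σH², 0, R, 0], [0, σH², 0, R], [R, 0, σH², 0], [0, R, 0, σH²]]` (in-phase and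
quadrature parts independent, each of variance `σH²`, with
`E[H_{l,i,I} H_{l,j,I}] = E[H_{l,i,Q} H_{l,j,Q}] = R`), and the rows are i.i.d. across
`l = 1, ..., N_r`.  Then
`E[|∑ l, H_{l,i}^* H_{l,j}|²] = 4 N_r (σH⁴ + N_r R²)`. -/
theorem stmt_4 {Ω : Type*} [MeasurableSpace Ω] (μ : Measure Ω) [IsProbabilityMeasure μ]
    (Nr : ℕ) (hNr : 0 < Nr) (σH R : ℝ) (hσH : 0 < σH)
    (X : Fin Nr → Ω → (Fin 4 → ℝ))
    (Cmat : Fin 4 → Fin 4 → ℝ)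
    (hCmat : Cmat = ![![σH ^ 2, 0, R, 0], ![0, σH ^ 2, 0, R],
                      ![R, 0, σH ^ 2, 0], ![0, R, 0, σH ^ 2]])
    (hIndep : iIndepFun X μ)
    (hGauss : ∀ l, ∀ c : Fin 4 → ℝ,
      Measure.map (fun ω => ∑ k, c k * X l ω k) μ =
        gaussianReal 0 (Real.toNNReal (∑ k, ∑ m, c k * c m * Cmat k m))) :
    ∫ ω, ‖∑ l, (starRingEnd ℂ) (Complex.mk (X l ω 0) (X l ω 1)) *
        Complex.mk (X l ω 2) (X l ω 3)‖ ^ 2 ∂μ =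
      4 * Nr * (σH ^ 4 + Nr * R ^ 2) := by
  subst hCmat
  have row := fun l => row_moments μ σH R hσH (X l) (hGauss l)
  set Rp : Fin Nr → Ω → ℝ := fun l ω => X l ω 0 * X l ω 2 + X l ω 1 * X l ω 3 with hRp
  set Ip : Fin Nr → Ω → ℝ := fun l ω => X l ω 0 * X l ω 3 - X l ω 1 * X l ω 2 with hIp
  -- pointwise identity
  have hpt : ∀ ω, ‖∑ l, (starRingEnd ℂ) (Complex.mk (X l ω 0) (X l ω 1)) *
      Complex.mk (X l ω 2) (X l ω 3)‖ ^ 2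
      = ∑ l, ∑ l', (Rp l ω * Rp l' ω + Ip l ω * Ip l' ω) := by
    intro ω
    rw [Complex.sq_norm, Complex.normSq_apply, Complex.re_sum, Complex.im_sum]
    have hre : ∀ l : Fin Nr, ((starRingEnd ℂ) (Complex.mk (X l ω 0) (X l ω 1)) *
        Complex.mk (X l ω 2) (X l ω 3)).re = Rp l ω := by
      intro l
      simp only [Complex.mul_re, Complex.conj_re, Complex.conj_im, hRp]
      show X l ω 0 * X l ω 2 - -(X l ω 1) * X l ω 3 = _
      ring
    have him : ∀ l : Fin Nr, ((starRingEnd ℂ) (Complex.mk (X l ω 0) (X l ω 1)) *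
        Complex.mk (X l ω 2) (X l ω 3)).im = Ip l ω := by
      intro l
      simp only [Complex.mul_im, Complex.conj_re, Complex.conj_im, hIp]
      show X l ω 0 * X l ω 3 + -(X l ω 1) * X l ω 2 = _
      ring
    simp only [hre, him]
    rw [Finset.sum_mul_sum, Finset.sum_mul_sum, ← Finset.sum_add_distrib]
    exact Finset.sum_congr rfl fun l _ => (Finset.sum_add_distrib).symm
  rw [integral_congr_ae (Filter.Eventually.of_forall hpt)]
  -- independence for distinct rows
  have mφR : Measurable (fun v : Fin 4 → ℝ => v 0 * v 2 + v 1 * v 3) :=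
    ((measurable_pi_apply 0).mul (measurable_pi_apply 2)).add
      ((measurable_pi_apply 1).mul (measurable_pi_apply 3))
  have mφI : Measurable (fun v : Fin 4 → ℝ => v 0 * v 3 - v 1 * v 2) :=
    ((measurable_pi_apply 0).mul (measurable_pi_apply 3)).sub
      ((measurable_pi_apply 1).mul (measurable_pi_apply 2))
  have hneR : ∀ {l l' : Fin Nr}, l ≠ l' → IndepFun (Rp l) (Rp l') μ := by
    intro l l' hne
    exact (hIndep.indepFun hne).comp mφR mφR
  have hneI : ∀ {l l' : Fin Nr}, l ≠ l' → IndepFun (Ip l) (Ip l') μ := by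
    intro l l' hne
    exact (hIndep.indepFun hne).comp mφI mφI
  have intF : ∀ l l', Integrable (fun ω => Rp l ω * Rp l' ω + Ip l ω * Ip l' ω) μ := by
    intro l l'
    rcases eq_or_ne l l' with rfl | hne
    · have h := (row l).2.2.2.2.1
      have e : (fun ω => (Rp l ω) ^ 2 + (Ip l ω) ^ 2)
          = fun ω => Rp l ω * Rp l ω + Ip l ω * Ip l ω := by
        funext ω; ring
      rw [← e]
      exact h
    · exact ((hneR hne).integrable_mul (row l).1 (row l').1).add
        ((hneI hne).integrable_mul (row l).2.1 (row l').2.1)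
  have EF : ∀ l l', ∫ ω, (Rp l ω * Rp l' ω + Ip l ω * Ip l' ω) ∂μ
      = if l = l' then 4 * σH ^ 4 + 4 * R ^ 2 else 4 * R ^ 2 := by
    intro l l'
    rcases eq_or_ne l l' with rfl | hne
    · rw [if_pos rfl]
      have h := (row l).2.2.2.2.2
      have e : (fun ω => (Rp l ω) ^ 2 + (Ip l ω) ^ 2)
          = fun ω => Rp l ω * Rp l ω + Ip l ω * Ip l ω := by
        funext ω; ring
      rw [← e]
      exact h
    · rw [if_neg hne]
      have hR := (hneR hne).integral_mul_eq_mul_integral (row l).1.aestronglyMeasurable (row l').1.aestronglyMeasurable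
      have hI := (hneI hne).integral_mul_eq_mul_integral (row l).2.1.aestronglyMeasurable (row l').2.1.aestronglyMeasurable
      have iR : Integrable (fun ω => Rp l ω * Rp l' ω) μ :=
        (hneR hne).integrable_mul (row l).1 (row l').1
      have iI : Integrable (fun ω => Ip l ω * Ip l' ω) μ :=
        (hneI hne).integrable_mul (row l).2.1 (row l').2.1
      rw [integral_add iR iI]
      have e1 : ∫ ω, Rp l ω * Rp l' ω ∂μ = (2 * R) * (2 * R) := by
        rw [show (fun ω => Rp l ω * Rp l' ω) = Rp l * Rp l' from rfl, hR,
          (row l).2.2.1, (row l').2.2.1]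
      have e2 : ∫ ω, Ip l ω * Ip l' ω ∂μ = 0 := by
        rw [show (fun ω => Ip l ω * Ip l' ω) = Ip l * Ip l' from rfl, hI,
          (row l).2.2.2.1, (row l').2.2.2.1]
        ring
      rw [e1, e2]; ring
  rw [integral_finset_sum _ (fun l _ => integrable_finset_sum _ (fun l' _ => intF l l'))]
  have : ∀ l : Fin Nr, ∫ ω, ∑ l', (Rp l ω * Rp l' ω + Ip l ω * Ip l' ω) ∂μ
      = (4 * σH ^ 4 + 4 * R ^ 2) + ((Nr : ℝ) - 1) * (4 * R ^ 2) := by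
    intro l
    rw [integral_finset_sum _ (fun l' _ => intF l l')]
    have e : ∀ l' : Fin Nr, ∫ ω, (Rp l ω * Rp l' ω + Ip l ω * Ip l' ω) ∂μ
        = 4 * R ^ 2 + (if l = l' then (4 * σH ^ 4 + 4 * R ^ 2) - 4 * R ^ 2 else 0) := by
      intro l'
      rw [EF l l']
      rcases eq_or_ne l l' with rfl | hne
      · simp; ring
      · simp [hne]
    simp only [e]
    rw [Finset.sum_add_distrib, Finset.sum_const, Finset.sum_ite_eq]
    simp [Finset.card_univ, mul_comm]
    ring
  simp only [this]
  rw [Finset.sum_const, Finset.card_univ]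
  simp only [Fintype.card_fin, nsmul_eq_mul]
  ring
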